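/- arXiv:1309.5656 — 2 statements merged into one kernel-verified Lean document; each statement's English description precedes it below -/
import Mathlib

section
/- Let u : ℝ² → ℝ be smooth and let φ : ℝ² → ℝ be smooth with compact support. Then ∫_{ℝ²} det(D²u) φ dx = ∫_{ℝ²} [ φ_{x₁} u_{x₂} u_{x₁x₂} + φ_{x₂} u_{x₁} u_{x₁x₂} + u_{x₁} u_{x₂} φ_{x₁x₂} ] dx. -/
open MeasureTheory

/-- Partial derivative in the `i`-th coordinate direction of `f : ℝ² → ℝ`. -/
noncomputable def pd (i : Fin 2) (f : EuclideanSpace ℝ (Fin 2) → ℝ) :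
    EuclideanSpace ℝ (Fin 2) → ℝ :=
  fun x => fderiv ℝ f x (EuclideanSpace.single i 1)

/-- Hessian determinant of `f : ℝ² → ℝ`. -/
noncomputable def hessDet (f : EuclideanSpace ℝ (Fin 2) → ℝ) :
    EuclideanSpace ℝ (Fin 2) → ℝ :=
  fun x => pd 0 (pd 0 f) x * pd 1 (pd 1 f) x - (pd 1 (pd 0 f) x) ^ 2

section helpers
variable {f g : EuclideanSpace ℝ (Fin 2) → ℝ} {i j : Fin 2}

lemma fderiv_contDiff (hf : ContDiff ℝ (⊤ : ℕ∞) f) : ContDiff ℝ (⊤ : ℕ∞) (fderiv ℝ f) :=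
  hf.fderiv_right (m := (⊤ : ℕ∞)) (by simp)

lemma pd_contDiff (i : Fin 2) (hf : ContDiff ℝ (⊤ : ℕ∞) f) : ContDiff ℝ (⊤ : ℕ∞) (pd i f) :=
  (fderiv_contDiff hf).clm_apply contDiff_const

lemma pd_hcs (i : Fin 2) (hfc : HasCompactSupport f) : HasCompactSupport (pd i f) :=
  hfc.fderiv_apply ℝ _

lemma pd_mul (i : Fin 2) (hf : ContDiff ℝ (⊤ : ℕ∞) f) (hg : ContDiff ℝ (⊤ : ℕ∞) g) :
    pd i (fun x => f x * g x) = fun x => pd i f x * g x + f x * pd i g x := by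
  funext x
  have hfd := (hf.differentiable (by simp)).differentiableAt (x := x)
  have hgd := (hg.differentiable (by simp)).differentiableAt (x := x)
  simp only [pd, fderiv_fun_mul hfd hgd, ContinuousLinearMap.add_apply,
    ContinuousLinearMap.smul_apply, smul_eq_mul]
  ring

lemma pd_comm (i j : Fin 2) (hf : ContDiff ℝ (⊤ : ℕ∞) f) :
    pd i (pd j f) = pd j (pd i f) := by
  funext x
  have h1 : ∀ y, HasFDerivAt f (fderiv ℝ f y) y :=
    fun y => ((hf.differentiable (by simp)) y).hasFDerivAt
  have h2 : HasFDerivAt (fderiv ℝ f) (fderiv ℝ (fderiv ℝ f) x) x :=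
    (((fderiv_contDiff hf).differentiable (by simp)) x).hasFDerivAt
  have hsymm := second_derivative_symmetric h1 h2 (EuclideanSpace.single i 1)
    (EuclideanSpace.single j 1)
  have hc : DifferentiableAt ℝ (fderiv ℝ f) x :=
    ((fderiv_contDiff hf).differentiable (by simp)) x
  have key : ∀ k l : Fin 2, pd k (pd l f) x =
      fderiv ℝ (fderiv ℝ f) x (EuclideanSpace.single k 1) (EuclideanSpace.single l 1) := by
    intro k l
    have : pd l f = fun y => (fderiv ℝ f y) ((fun _ => EuclideanSpace.single l 1) y) := rfl
    rw [pd, this, fderiv_clm_apply hc (differentiableAt_const _)]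
    simp
  rw [key, key, hsymm]

lemma integral_pd_eq_zero (i : Fin 2) (hf : ContDiff ℝ (⊤ : ℕ∞) f)
    (hfc : HasCompactSupport f) : ∫ x, pd i f x = 0 := by
  have h := integral_mul_fderiv_eq_neg_fderiv_mul_of_integrable
    (μ := (volume : Measure (EuclideanSpace ℝ (Fin 2))))
    (f := fun _ => (1 : ℝ)) (g := f) (v := EuclideanSpace.single i 1)
    ?_ ?_ ?_ (fun x _ => differentiableAt_const (1 : ℝ)) (fun x _ => hf.differentiable (by simp) x)
  · simpa [pd, fderiv_fun_const] using h
  · simp [fderiv_fun_const]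
  · simp only [one_mul]; exact ((pd_contDiff i hf).continuous).integrable_of_hasCompactSupport (pd_hcs i hfc)
  · simpa using (hf.continuous).integrable_of_hasCompactSupport hfc
end helpers

theorem stmt2 (u φ : EuclideanSpace ℝ (Fin 2) → ℝ)
    (hu : ContDiff ℝ (⊤ : ℕ∞) u) (hφ : ContDiff ℝ (⊤ : ℕ∞) φ) (hφc : HasCompactSupport φ) :
    ∫ x, hessDet u x * φ x =
      ∫ x, (pd 0 φ x * pd 1 u x * pd 1 (pd 0 u) x
          + pd 1 φ x * pd 0 u x * pd 1 (pd 0 u) x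
          + pd 0 u x * pd 1 u x * pd 1 (pd 0 φ) x) := by
  have hu' : ContDiff ℝ (⊤ : ℕ∞) u := hu.of_le (by simp)
  have hφ' : ContDiff ℝ (⊤ : ℕ∞) φ := hφ.of_le (by simp)
  have h0u := pd_contDiff 0 hu'
  have h1u := pd_contDiff 1 hu'
  have h10u := pd_contDiff 1 h0u
  have h11u := pd_contDiff 1 h1u
  have h0φ := pd_contDiff 0 hφ'
  have h1φ := pd_contDiff 1 hφ'
  have h10φ := pd_contDiff 1 h0φ
  have hc0φ := pd_hcs 0 hφc
  have int_of : ∀ (f : EuclideanSpace ℝ (Fin 2) → ℝ), ContDiff ℝ (⊤ : ℕ∞) f →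
      HasCompactSupport f → Integrable f :=
    fun f hf hfc => hf.continuous.integrable_of_hasCompactSupport hfc
  -- the three "divergence" functions
  have hF₀ : ContDiff ℝ (⊤ : ℕ∞) (fun y => (pd 0 u y * pd 1 (pd 1 u) y) * φ y) :=
    (h0u.mul h11u).mul hφ'
  have hF₁ : ContDiff ℝ (⊤ : ℕ∞) (fun y => (pd 0 u y * pd 1 (pd 0 u) y) * φ y) :=
    (h0u.mul h10u).mul hφ'
  have hF₂ : ContDiff ℝ (⊤ : ℕ∞) (fun y => (pd 0 u y * pd 1 u y) * pd 0 φ y) :=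
    (h0u.mul h1u).mul h0φ
  have hcF₀ : HasCompactSupport (fun y => (pd 0 u y * pd 1 (pd 1 u) y) * φ y) :=
    hφc.mul_left
  have hcF₁ : HasCompactSupport (fun y => (pd 0 u y * pd 1 (pd 0 u) y) * φ y) :=
    hφc.mul_left
  have hcF₂ : HasCompactSupport (fun y => (pd 0 u y * pd 1 u y) * pd 0 φ y) :=
    hc0φ.mul_left
  have E0 := integral_pd_eq_zero 0 hF₀ hcF₀
  have E1 := integral_pd_eq_zero 1 hF₁ hcF₁
  have E2 := integral_pd_eq_zero 1 hF₂ hcF₂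
  -- Schwarz
  have hs : pd 0 (pd 1 (pd 1 u)) = pd 1 (pd 1 (pd 0 u)) := by
    rw [pd_comm 0 1 h1u, pd_comm 0 1 hu']
  -- pointwise identity
  have key : (fun x => hessDet u x * φ x) =
      fun x => (pd 0 φ x * pd 1 u x * pd 1 (pd 0 u) x
          + pd 1 φ x * pd 0 u x * pd 1 (pd 0 u) x
          + pd 0 u x * pd 1 u x * pd 1 (pd 0 φ) x)
        + (pd 0 (fun y => (pd 0 u y * pd 1 (pd 1 u) y) * φ y) x
          - pd 1 (fun y => (pd 0 u y * pd 1 (pd 0 u) y) * φ y) x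
          - pd 1 (fun y => (pd 0 u y * pd 1 u y) * pd 0 φ y) x) := by
    funext x
    simp only [pd_mul 0 (h0u.mul h11u) hφ', pd_mul 0 h0u h11u,
      pd_mul 1 (h0u.mul h10u) hφ', pd_mul 1 h0u h10u,
      pd_mul 1 (h0u.mul h1u) h0φ, pd_mul 1 h0u h1u, hs, hessDet]
    ring
  -- integrability of pieces
  have hc1φ := pd_hcs 1 hφc
  have hc10φ := pd_hcs 1 hc0φ
  have iT : Integrable (fun x => (pd 0 φ x * pd 1 u x * pd 1 (pd 0 u) x
          + pd 1 φ x * pd 0 u x * pd 1 (pd 0 u) x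
          + pd 0 u x * pd 1 u x * pd 1 (pd 0 φ) x)) :=
    int_of _ ((((h0φ.mul h1u).mul h10u).add ((h1φ.mul h0u).mul h10u)).add
        ((h0u.mul h1u).mul h10φ))
      ((hc0φ.mul_right.mul_right.add hc1φ.mul_right.mul_right).add hc10φ.mul_left)
  have iG0 : Integrable (pd 0 (fun y => (pd 0 u y * pd 1 (pd 1 u) y) * φ y)) :=
    int_of _ (pd_contDiff 0 hF₀) (pd_hcs 0 hcF₀)
  have iG1 : Integrable (pd 1 (fun y => (pd 0 u y * pd 1 (pd 0 u) y) * φ y)) :=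
    int_of _ (pd_contDiff 1 hF₁) (pd_hcs 1 hcF₁)
  have iG2 : Integrable (pd 1 (fun y => (pd 0 u y * pd 1 u y) * pd 0 φ y)) :=
    int_of _ (pd_contDiff 1 hF₂) (pd_hcs 1 hcF₂)
  have iG01 : Integrable (fun x => pd 0 (fun y => (pd 0 u y * pd 1 (pd 1 u) y) * φ y) x
      - pd 1 (fun y => (pd 0 u y * pd 1 (pd 0 u) y) * φ y) x) := iG0.sub iG1
  have iG012 : Integrable (fun x => pd 0 (fun y => (pd 0 u y * pd 1 (pd 1 u) y) * φ y) x
      - pd 1 (fun y => (pd 0 u y * pd 1 (pd 0 u) y) * φ y) x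
      - pd 1 (fun y => (pd 0 u y * pd 1 u y) * pd 0 φ y) x) := iG01.sub iG2
  rw [key, integral_add iT iG012, integral_sub iG01 iG2, integral_sub iG0 iG1, E0, E1, E2]
  ring
end

section
/- Define ψ : ℝ² → ℝ by ψ(x) = (max(1 − |x|², 0))⁴, where |x| is the Euclidean norm. Then ψ is twice continuously differentiable on ℝ², the product ψ_{x₁}(x) ψ_{x₂}(x) ψ_{x₁x₂}(x) is nonnegative for every x ∈ ℝ², and ∫_{ℝ²} ψ_{x₁} ψ_{x₂} ψ_{x₁x₂} dx > 0. -/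
open MeasureTheory

/-- `ψ(x) = (max(1 − |x|², 0))⁴`. -/
noncomputable def psi : EuclideanSpace ℝ (Fin 2) → ℝ :=
  fun x => (max (1 - ‖x‖ ^ 2) 0) ^ 4

/-!
With `M x = max (1 - ‖x‖ ^ 2) 0`, the chain rule gives `ψ_{x_i} = -8 x_i M³` and
`ψ_{x₁x₂} = 48 x₁ x₂ M²`, so the integrand is `3072 x₁² x₂² M⁸`: continuous, nonnegative,
supported in the closed unit ball and positive at `(1/2, 1/2)`. Regularity comes from
`t ↦ max t 0 ^ (n + 1)` being `Cⁿ`, its derivative being `(n + 1) * max t 0 ^ n`.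
-/

theorem hasDerivAt_max_zero_pow (n : ℕ) (t : ℝ) :
    HasDerivAt (fun s : ℝ => max s 0 ^ (n + 2)) ((n + 2) * max t 0 ^ (n + 1)) t := by
  refine hasDerivAt_of_hasDerivAt_of_ne' (x := 0)
    (g := fun t => (n + 2) * max t 0 ^ (n + 1)) (fun y hy => ?_) (by fun_prop) (by fun_prop) t
  rcases hy.lt_or_gt with hy | hy
  · rw [max_eq_right hy.le, zero_pow n.succ_ne_zero, mul_zero]
    refine (hasDerivAt_const y 0).congr_of_eventuallyEq ?_
    filter_upwards [eventually_lt_nhds hy] with s hs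
    rw [max_eq_right hs.le, zero_pow (by omega)]
  · rw [max_eq_left hy.le]
    convert (hasDerivAt_pow (n + 2) y).congr_of_eventuallyEq ?_ using 1
    · push_cast; ring
    · filter_upwards [eventually_gt_nhds hy] with s hs
      rw [max_eq_left hs.le]

theorem contDiff_max_zero_pow (n : ℕ) : ContDiff ℝ n (fun t : ℝ => max t 0 ^ (n + 1)) := by
  induction n with
  | zero => simpa [contDiff_zero] using continuous_id.max continuous_const
  | succ n ih =>
    rw [Nat.cast_succ, contDiff_succ_iff_deriv]
    refine ⟨fun t => (hasDerivAt_max_zero_pow n t).differentiableAt, by simp, ?_⟩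
    rw [funext fun t => (hasDerivAt_max_zero_pow n t).deriv]
    exact contDiff_const.mul ih

section InnerProductSpace

variable {E : Type*} [NormedAddCommGroup E] [InnerProductSpace ℝ E]

theorem hasFDerivAt_max_one_sub_norm_sq_pow (n : ℕ) (x : E) :
    HasFDerivAt (fun y : E => max (1 - ‖y‖ ^ 2) 0 ^ (n + 2))
      (-(2 * ((n : ℝ) + 2) * max (1 - ‖x‖ ^ 2) 0 ^ (n + 1)) • innerSL ℝ x) x := by
  refine ((hasDerivAt_max_zero_pow n _).comp_hasFDerivAt x
    ((hasStrictFDerivAt_norm_sq x).hasFDerivAt.const_sub 1)).congr_fderiv ?_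
  ext v
  simp only [neg_apply, smul_apply, coe_innerSL_apply, nsmul_eq_mul, smul_eq_mul]
  ring

theorem hasCompactSupport_max_one_sub_norm_sq_pow [FiniteDimensional ℝ E] (n : ℕ) :
    HasCompactSupport (fun y : E => max (1 - ‖y‖ ^ 2) 0 ^ (n + 1)) := by
  refine HasCompactSupport.intro (isCompact_closedBall 0 1) fun x hx => ?_
  rw [Metric.mem_closedBall, dist_zero_right, not_le] at hx
  rw [max_eq_right (by nlinarith), zero_pow n.succ_ne_zero]

end InnerProductSpace

theorem pd_psi (i : Fin 2) (x : EuclideanSpace ℝ (Fin 2)) :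
    pd i psi x = -8 * x i * max (1 - ‖x‖ ^ 2) 0 ^ 3 := by
  have h : HasFDerivAt psi _ x := hasFDerivAt_max_one_sub_norm_sq_pow 2 x
  rw [pd, h.fderiv]
  simp only [smul_apply, coe_innerSL_apply, EuclideanSpace.inner_single_right,
    conj_trivial, one_mul, smul_eq_mul]
  ring

theorem pd_one_pd_zero_psi (x : EuclideanSpace ℝ (Fin 2)) :
    pd 1 (pd 0 psi) x = 48 * x 0 * x 1 * max (1 - ‖x‖ ^ 2) 0 ^ 2 := by
  have h := (((EuclideanSpace.proj (0 : Fin 2)).hasFDerivAt.const_mul (-8 : ℝ)).mul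
    (hasFDerivAt_max_one_sub_norm_sq_pow 1 x)).congr_of_eventuallyEq (.of_forall (pd_psi 0))
  rw [pd, h.fderiv]
  simp only [add_apply, smul_apply, coe_innerSL_apply, EuclideanSpace.inner_single_right,
    conj_trivial, one_mul, PiLp.proj_apply, PiLp.single_apply, zero_ne_one, if_false, smul_eq_mul]
  ring

theorem pd_psi_mul_pd_psi_mul_pd_pd_psi (x : EuclideanSpace ℝ (Fin 2)) :
    pd 0 psi x * pd 1 psi x * pd 1 (pd 0 psi) x
      = 3072 * x 0 ^ 2 * x 1 ^ 2 * max (1 - ‖x‖ ^ 2) 0 ^ 8 := by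
  rw [pd_psi, pd_psi, pd_one_pd_zero_psi]
  ring

theorem stmt7 :
    ContDiff ℝ 2 psi ∧
    (∀ x : EuclideanSpace ℝ (Fin 2),
      0 ≤ pd 0 psi x * pd 1 psi x * pd 1 (pd 0 psi) x) ∧
    0 < ∫ x, pd 0 psi x * pd 1 psi x * pd 1 (pd 0 psi) x := by
  simp only [pd_psi_mul_pd_psi_mul_pd_pd_psi]
  refine ⟨?_, fun x => by positivity, ?_⟩
  · exact ((contDiff_max_zero_pow 3).of_le (by norm_num)).comp
      (contDiff_const.sub (contDiff_norm_sq ℝ))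
  · refine Continuous.integral_pos_of_hasCompactSupport_nonneg_nonzero (x := !₂[1 / 2, 1 / 2])
      (by fun_prop) (hasCompactSupport_max_one_sub_norm_sq_pow 7).mul_left
      (fun x => by positivity) ?_
    norm_num [EuclideanSpace.real_norm_sq_eq]
end
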